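/- Let x and y be p-strings both starting with p-symbols (fce(x), fce(y) ∉ Σs), with ⟨x[2..]⟩ < ⟨y[2..]⟩, and let e = lcp∞(⟨x[2..]⟩,⟨y[2..]⟩). If fce(x) = fce(y) ≤ e, then ⟨x⟩ < ⟨y⟩, lcp(⟨x⟩,⟨y⟩) = lcp(⟨x[2..]⟩,⟨y[2..]⟩)+1 and lcp∞(⟨x⟩,⟨y⟩) = e. -/

import Mathlib

/-- Symbols of a parameterized string: static symbols `s a` (from Σs) and
parameter symbols `p a` (from Σp). -/
inductive PSym where
  | s : ℕ → PSym
  | p : ℕ → PSym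
deriving DecidableEq

/-- Symbols of a p-encoded string: static symbols, finite distances, and ∞. -/
inductive Enc where
  | s : ℕ → Enc
  | fin : ℕ → Enc
  | inf : Enc
deriving DecidableEq

/-- Order embedding: static symbols < natural numbers < ∞. -/
def Enc.toPair : Enc → ℕ ×ₗ ℕ
  | .s a => toLex (0, a)
  | .fin d => toLex (1, d)
  | .inf => toLex (2, 0)

instance : LinearOrder Enc :=
  LinearOrder.lift' Enc.toPair (by
    rintro (a | a | _) (b | b | _) h <;>
      simp_all [Enc.toPair, toLex_inj, Prod.ext_iff])

/-- Largest position `j < i` (0-based) carrying the same symbol as position `i`. -/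
def prevOcc (w : List PSym) (i : ℕ) : Option ℕ :=
  ((List.range i).filter (fun j => w[j]? = w[i]?)).max?

/-- The p-encoding of position `i` (0-based) of `w`. -/
def pencSym (w : List PSym) (i : ℕ) : Enc :=
  match w[i]? with
  | some (PSym.s a) => Enc.s a
  | some (PSym.p _) =>
    match prevOcc w i with
    | some j => Enc.fin (i - j)
    | none => Enc.inf
  | none => Enc.inf

/-- The p-encoding ⟨w⟩ of a p-string `w`. -/
def penc (w : List PSym) : List Enc :=
  (List.range w.length).map (pencSym w)

/-- Lexicographic (strict) order on p-encoded strings. -/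
def lexLt (x y : List Enc) : Prop := List.Lex (· < ·) x y

def lexLe (x y : List Enc) : Prop := lexLt x y ∨ x = y

/-- Length of the longest common prefix. -/
def lcp {α : Type*} [DecidableEq α] : List α → List α → ℕ
  | a :: x, b :: y => if a = b then lcp x y + 1 else 0
  | _, _ => 0

/-- Number of ∞'s in the longest common prefix of two p-encoded strings. -/
def lcpInf (x y : List Enc) : ℕ := (x.take (lcp x y)).count Enc.inf

/-- Number of distinct p-symbols occurring in `w` (denoted |w|_p). -/
def distinctP (w : List PSym) : ℕ :=
  (w.filterMap (fun s => match s with | PSym.p a => some a | PSym.s _ => none)).dedup.length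

/-- For `w` starting with a p-symbol: the rank of `w[1]` among the distinct
p-symbols of `w[1..h+1]`, where `h+1 = min{|w|, second occurrence of w[1] in w}`. -/
def fceRank (w : List PSym) : ℕ :=
  match w with
  | [] => 0
  | c :: rest => distinctP ((c :: rest).take (min (c :: rest).length (2 + rest.idxOf c)))

/-- The function fce from the paper; `fce ε = $` is modelled as `Enc.s 0`. -/
def fce (w : List PSym) : Enc :=
  match w with
  | [] => Enc.s 0
  | PSym.s a :: _ => Enc.s a
  | w => Enc.fin (fceRank w)

/-! Prepending a p-symbol `c` to `w` changes ⟨w⟩ only at the first occurrence `j` of `c` in `w`,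
where the ∞ becomes the distance `j + 1`, and puts a new ∞ in front. The rank fce(c w) is one
more than the number of ∞'s of ⟨w⟩ before position `j`, so `j` is the position of the fce-th ∞
of ⟨w⟩. If fce(x) = fce(y) ≤ e, this ∞ lies in the common prefix of ⟨x[2..]⟩ and ⟨y[2..]⟩, so
both encodings are modified at the same position of the common prefix by the same value: the
first mismatch and the order are untouched, and one ∞ of the common prefix is traded for the
new leading one. -/

section Lcp

variable {α : Type*} [DecidableEq α]

@[simp] theorem lcp_cons_self (a : α) (x y : List α) : lcp (a :: x) (a :: y) = lcp x y + 1 :=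
  if_pos rfl

theorem lcp_eq_zero_of_not_cons_cons {x y : List α}
    (h : ∀ a x' b y', x = a :: x' → y = b :: y' → False) : lcp x y = 0 := by
  cases x <;> cases y <;> first | rfl | exact (h _ _ _ _ rfl rfl).elim

theorem take_lcp (x y : List α) : x.take (lcp x y) = y.take (lcp x y) := by
  induction x, y using lcp.induct with
  | case1 x b y ih => simpa using ih
  | case2 a x b y hab => simp [lcp, hab]
  | case3 x y h => simp [lcp_eq_zero_of_not_cons_cons h]

theorem lcp_set_of_lt_lcp {x y : List α} {i : ℕ} (hi : i < lcp x y) (v : α) :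
    lcp (x.set i v) (y.set i v) = lcp x y := by
  induction x, y using lcp.induct generalizing i with
  | case1 x b y ih =>
    cases i with
    | zero => simp
    | succ i =>
      rw [lcp_cons_self] at hi
      rw [List.set_cons_succ, List.set_cons_succ, lcp_cons_self, lcp_cons_self, ih (by omega)]
  | case2 a x b y hab => simp [lcp, hab] at hi
  | case3 x y h => simp [lcp_eq_zero_of_not_cons_cons h] at hi

theorem List.Lex.set_of_lt_lcp {r : α → α → Prop} [Std.Irrefl r] {x y : List α} {i : ℕ}
    (hi : i < lcp x y) (v : α) (hxy : List.Lex r x y) : List.Lex r (x.set i v) (y.set i v) := by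
  induction x, y using lcp.induct generalizing i with
  | case1 x b y ih =>
    rw [List.lex_cons_iff] at hxy
    cases i with
    | zero => exact List.Lex.cons hxy
    | succ i =>
      rw [lcp_cons_self] at hi
      exact List.Lex.cons (ih (by omega) hxy)
  | case2 a x b y hab => simp [lcp, hab] at hi
  | case3 x y h => simp [lcp_eq_zero_of_not_cons_cons h] at hi

end Lcp

section Count

variable {α : Type*} [BEq α] {l : List α} {x : α}

theorem lt_of_count_take_lt_count_take {j n : ℕ}
    (h : (l.take j).count x < (l.take n).count x) : j < n := by
  by_contra hnj
  exact (List.take_sublist_take_left (not_lt.1 hnj)).count_le x |>.not_gt h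

variable [LawfulBEq α]

theorem count_take_add_one_of_getElem? {i : ℕ} (h : l[i]? = some x) :
    (l.take (i + 1)).count x = (l.take i).count x + 1 := by
  simp [List.take_add_one, h]

theorem eq_of_count_take_eq {i j : ℕ} (hi : l[i]? = some x) (hj : l[j]? = some x)
    (h : (l.take i).count x = (l.take j).count x) : i = j := by
  have hji : j < i + 1 :=
    lt_of_count_take_lt_count_take (by rw [count_take_add_one_of_getElem? hi]; omega)
  have hij : i < j + 1 :=
    lt_of_count_take_lt_count_take (by rw [count_take_add_one_of_getElem? hj]; omega)
  omega

theorem count_set_add_one_of_getElem? {i : ℕ} {y : α} (h : l[i]? = some x) (hyx : y ≠ x) :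
    (l.set i y).count x + 1 = l.count x := by
  obtain ⟨hi, hix⟩ := List.getElem?_eq_some_iff.1 h
  have hpos := List.count_pos_iff.2 (List.mem_of_getElem? h)
  rw [List.count_set hi, hix]
  simp only [beq_self_eq_true, if_true, beq_iff_eq, hyx, if_false]
  omega

end Count

theorem List.notMem_take_idxOf {α : Type*} [BEq α] [LawfulBEq α] (a : α) (l : List α) :
    a ∉ l.take (l.idxOf a) := by
  rw [List.mem_take_iff_getElem]
  rintro ⟨j, hj, hja⟩
  simpa [hja] using List.not_of_lt_findIdx (p := (· == a)) (lt_min_iff.1 hj).1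

theorem List.idxOf_le_of_getElem? {α : Type*} [BEq α] [LawfulBEq α] {a : α} {l : List α}
    {i : ℕ} (h : l[i]? = some a) : l.idxOf a ≤ i := by
  by_contra hi
  refine l.notMem_take_idxOf a (List.mem_iff_getElem?.2 ⟨i, ?_⟩)
  rwa [List.getElem?_take, if_pos (by omega)]

section DistinctP

theorem mem_filterMap_pSym_iff {a : ℕ} {l : List PSym} :
    a ∈ l.filterMap (fun s => match s with | PSym.p a => some a | PSym.s _ => none) ↔
      PSym.p a ∈ l := by
  simp only [List.mem_filterMap]
  constructor
  · rintro ⟨_ | b, hb, hba⟩ <;> simp_all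
  · exact fun h => ⟨_, h, rfl⟩

theorem distinctP_congr {u w : List PSym} (h : ∀ a, PSym.p a ∈ u ↔ PSym.p a ∈ w) :
    distinctP u = distinctP w := by
  unfold distinctP
  rw [← List.card_toFinset, ← List.card_toFinset]
  congr 1
  ext a
  simpa only [List.mem_toFinset, mem_filterMap_pSym_iff] using h a

theorem distinctP_cons_s (a : ℕ) (l : List PSym) : distinctP (PSym.s a :: l) = distinctP l :=
  rfl

theorem distinctP_cons_p_of_mem {a : ℕ} {l : List PSym} (h : PSym.p a ∈ l) :
    distinctP (PSym.p a :: l) = distinctP l :=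
  distinctP_congr fun b => by simp only [List.mem_cons]; grind

theorem distinctP_cons_p_of_notMem {a : ℕ} {l : List PSym} (h : PSym.p a ∉ l) :
    distinctP (PSym.p a :: l) = distinctP l + 1 := by
  simp [distinctP, List.dedup_cons_of_notMem (mem_filterMap_pSym_iff.not.2 h)]

end DistinctP

theorem fceRank_p_cons (a : ℕ) (l : List PSym) :
    fceRank (PSym.p a :: l) = distinctP (l.take (l.idxOf (PSym.p a))) + 1 := by
  have hfresh := l.notMem_take_idxOf (PSym.p a)
  by_cases ha : PSym.p a ∈ l
  · have hj := List.idxOf_lt_length_iff.2 ha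
    have htake : l.take (l.idxOf (PSym.p a) + 1) = l.take (l.idxOf (PSym.p a)) ++ [PSym.p a] := by
      rw [List.take_add_one, List.getElem?_idxOf ha, Option.toList_some]
    have hlen : min (PSym.p a :: l).length (2 + l.idxOf (PSym.p a)) = l.idxOf (PSym.p a) + 2 := by
      simp only [List.length_cons]; omega
    rw [fceRank, hlen, List.take_succ_cons, htake, ← distinctP_cons_p_of_notMem hfresh]
    exact distinctP_congr fun b => by simp only [List.mem_cons, List.mem_append]; grind
  · have hj := List.idxOf_eq_length_iff.2 ha
    rw [List.take_of_length_le hj.ge, fceRank,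
      List.take_of_length_le (by simp only [List.length_cons]; omega),
      distinctP_cons_p_of_notMem ha]

section PrevOcc

theorem prevOcc_eq_none_iff (w : List PSym) (i : ℕ) :
    prevOcc w i = none ↔ ∀ j < i, w[j]? ≠ w[i]? := by
  simp [prevOcc, List.max?_eq_none_iff, List.filter_eq_nil_iff]

theorem prevOcc_eq_some_iff (w : List PSym) (i j : ℕ) :
    prevOcc w i = some j ↔ (j < i ∧ w[j]? = w[i]?) ∧ ∀ m < i, w[m]? = w[i]? → m ≤ j := by
  simp only [prevOcc, List.max?_eq_some_iff, List.mem_filter, List.mem_range, decide_eq_true_eq]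
  tauto

theorem prevOcc_zero (w : List PSym) : prevOcc w 0 = none := by
  simp [prevOcc]

theorem prevOcc_cons_succ (c : PSym) (l : List PSym) (i : ℕ) :
    prevOcc (c :: l) (i + 1) =
      match prevOcc l i with
      | some j => some (j + 1)
      | none => if l[i]? = some c then some 0 else none := by
  rcases h : prevOcc l i with _ | j
  · rw [prevOcc_eq_none_iff] at h
    split_ifs with hc
    · rw [prevOcc_eq_some_iff]
      refine ⟨⟨i.succ_pos, by simp [hc]⟩, ?_⟩
      rintro (_ | m) hm hme
      · rfl
      · exact absurd hme (h m (by omega))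
    · rw [prevOcc_eq_none_iff]
      rintro (_ | m) hm hme
      · exact hc (by simpa using hme.symm)
      · exact h m (by omega) hme
  · rw [prevOcc_eq_some_iff] at h ⊢
    obtain ⟨⟨hji, hj⟩, hmax⟩ := h
    refine ⟨⟨by omega, hj⟩, ?_⟩
    rintro (_ | m) hm hme
    · omega
    · exact Nat.succ_le_succ (hmax m (by omega) hme)

theorem prevOcc_take {l : List PSym} {n i : ℕ} (hi : i < n) :
    prevOcc (l.take n) i = prevOcc l i := by
  have hget : ∀ m ≤ i, (l.take n)[m]? = l[m]? := fun m hm => by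
    rw [List.getElem?_take, if_pos (by omega)]
  unfold prevOcc
  rw [hget i le_rfl]
  congr 1
  exact List.filter_congr fun m hm => by rw [hget m (List.mem_range.1 hm).le]

theorem prevOcc_idxOf {c : PSym} {l : List PSym} (h : c ∈ l) :
    prevOcc l (l.idxOf c) = none := by
  rw [prevOcc_eq_none_iff, List.getElem?_idxOf h]
  exact fun j hj hjc => absurd (List.idxOf_le_of_getElem? hjc) (by omega)

end PrevOcc

section Penc

theorem pencSym_cons_succ {c : PSym} {l : List PSym} {i : ℕ}
    (h : ¬(l[i]? = some c ∧ prevOcc l i = none)) : pencSym (c :: l) (i + 1) = pencSym l i := by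
  unfold pencSym
  rw [List.getElem?_cons_succ, prevOcc_cons_succ]
  rcases hi : l[i]? with _ | b | b <;> simp only
  rcases hp : prevOcc l i with _ | j <;> simp_all

theorem pencSym_p_cons_succ_of_fresh {a : ℕ} {l : List PSym} {i : ℕ}
    (hi : l[i]? = some (PSym.p a)) (hp : prevOcc l i = none) :
    pencSym (PSym.p a :: l) (i + 1) = Enc.fin (i + 1) := by
  simp [pencSym, prevOcc_cons_succ, hi, hp]

theorem length_penc (l : List PSym) : (penc l).length = l.length := by simp [penc]

theorem getElem_penc (l : List PSym) (i : ℕ) (h : i < (penc l).length) :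
    (penc l)[i] = pencSym l i := by
  simp [penc]

theorem penc_s_cons (a : ℕ) (l : List PSym) : penc (PSym.s a :: l) = Enc.s a :: penc l := by
  apply List.ext_getElem (by simp [length_penc])
  rintro (_ | i) _ _
  · simp [penc, pencSym]
  · rw [getElem_penc, List.getElem_cons_succ, getElem_penc]
    by_cases hi : l[i]? = some (PSym.s a)
    · simp [pencSym, hi]
    · exact pencSym_cons_succ fun h => hi h.1

theorem penc_p_cons (a : ℕ) (l : List PSym) :
    penc (PSym.p a :: l) =
      Enc.inf :: (penc l).set (l.idxOf (PSym.p a)) (Enc.fin (l.idxOf (PSym.p a) + 1)) := by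
  apply List.ext_getElem (by simp [length_penc])
  rintro (_ | i) h _
  · simp [penc, pencSym, prevOcc_zero]
  · rw [getElem_penc, List.getElem_cons_succ, List.getElem_set]
    have hil : i < l.length := by simpa [length_penc] using h
    split_ifs with hji
    · subst hji
      have ha := List.idxOf_lt_length_iff.1 hil
      exact pencSym_p_cons_succ_of_fresh (List.getElem?_idxOf ha) (prevOcc_idxOf ha)
    · rw [getElem_penc]
      refine pencSym_cons_succ fun ⟨hi, hp⟩ => ?_
      have hlt := lt_of_le_of_ne (List.idxOf_le_of_getElem? hi) hji
      rw [prevOcc_eq_none_iff] at hp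
      exact hp _ hlt (by rw [hi, List.getElem?_idxOf (List.mem_of_getElem? hi)])

theorem penc_take (l : List PSym) (n : ℕ) : (penc l).take n = penc (l.take n) := by
  apply List.ext_getElem (by simp [length_penc])
  intro i h _
  have hin : i < n := by simp at h; omega
  rw [List.getElem_take, getElem_penc, getElem_penc]
  unfold pencSym
  rw [prevOcc_take hin, List.getElem?_take, if_pos hin]

theorem getElem?_penc_idxOf {a : ℕ} {l : List PSym} (h : PSym.p a ∈ l) :
    (penc l)[l.idxOf (PSym.p a)]? = some Enc.inf := by
  have hj := List.idxOf_lt_length_iff.2 h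
  rw [List.getElem?_eq_getElem (by rwa [length_penc]), getElem_penc]
  simp [pencSym, List.getElem?_idxOf h, prevOcc_idxOf h]

theorem count_inf_penc (l : List PSym) : (penc l).count Enc.inf = distinctP l := by
  induction l with
  | nil => rfl
  | cons c l ih =>
    rcases c with a | a
    · simp [penc_s_cons, distinctP_cons_s, ih]
    · rw [penc_p_cons, List.count_cons_self]
      by_cases ha : PSym.p a ∈ l
      · rw [count_set_add_one_of_getElem? (getElem?_penc_idxOf ha) Enc.noConfusion,
          distinctP_cons_p_of_mem ha, ih]
      · rw [List.set_eq_of_length_le (by rw [length_penc, List.idxOf_eq_length_iff.2 ha]),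
          distinctP_cons_p_of_notMem ha, ih]

theorem count_inf_take_penc (l : List PSym) (n : ℕ) :
    ((penc l).take n).count Enc.inf = distinctP (l.take n) := by
  rw [penc_take, count_inf_penc]

end Penc

theorem getElem?_take_penc_idxOf_of_fceRank_le {a n : ℕ} {l : List PSym}
    (h : fceRank (PSym.p a :: l) ≤ ((penc l).take n).count Enc.inf) :
    ((penc l).take n)[l.idxOf (PSym.p a)]? = some Enc.inf ∧
      (((penc l).take n).take (l.idxOf (PSym.p a))).count Enc.inf + 1 =
        fceRank (PSym.p a :: l) := by
  have hk : fceRank (PSym.p a :: l) = ((penc l).take (l.idxOf (PSym.p a))).count Enc.inf + 1 := by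
    rw [fceRank_p_cons, count_inf_take_penc]
  have hjn : l.idxOf (PSym.p a) < n :=
    lt_of_count_take_lt_count_take (l := penc l) (x := Enc.inf) (by omega)
  have ha : PSym.p a ∈ l := by
    by_contra ha
    have hall : (penc l).take (l.idxOf (PSym.p a)) = penc l :=
      List.take_of_length_le (by rw [length_penc, List.idxOf_eq_length_iff.2 ha])
    have hsub := ((penc l).take_sublist n).count_le Enc.inf
    rw [hall] at hk
    omega
  rw [List.getElem?_take, if_pos hjn, getElem?_penc_idxOf ha, List.take_take,
    min_eq_left hjn.le, hk]
  exact ⟨rfl, rfl⟩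

theorem lcpInf_cons_inf_set_fin {x y : List Enc} {i : ℕ} (hi : i < lcp x y)
    (hx : x[i]? = some Enc.inf) (m : ℕ) :
    lcpInf (Enc.inf :: x.set i (Enc.fin m)) (Enc.inf :: y.set i (Enc.fin m)) = lcpInf x y := by
  have hxL : (x.take (lcp x y))[i]? = some Enc.inf := by rwa [List.getElem?_take, if_pos hi]
  unfold lcpInf
  rw [lcp_cons_self, lcp_set_of_lt_lcp hi, List.take_succ_cons, List.count_cons_self,
    List.take_set, count_set_add_one_of_getElem? hxL Enc.noConfusion]

/-- Case (B1): both strings start with p-symbols, ⟨x[2..]⟩ < ⟨y[2..]⟩,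
e = lcp∞(⟨x[2..]⟩,⟨y[2..]⟩) and fce(x) = fce(y) ≤ e. -/
theorem stmt6 (a b : ℕ) (xs ys : List PSym)
    (hlt : lexLt (penc xs) (penc ys))
    (e : ℕ) (he : e = lcpInf (penc xs) (penc ys))
    (heq : fceRank (PSym.p a :: xs) = fceRank (PSym.p b :: ys))
    (hle : fceRank (PSym.p a :: xs) ≤ e) :
    lexLt (penc (PSym.p a :: xs)) (penc (PSym.p b :: ys)) ∧
    lcp (penc (PSym.p a :: xs)) (penc (PSym.p b :: ys)) =
      lcp (penc xs) (penc ys) + 1 ∧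
    lcpInf (penc (PSym.p a :: xs)) (penc (PSym.p b :: ys)) = e := by
  set L := lcp (penc xs) (penc ys)
  have hC : (penc ys).take L = (penc xs).take L := (take_lcp _ _).symm
  have hle' : fceRank (PSym.p a :: xs) ≤ ((penc xs).take L).count Enc.inf := by
    rwa [he, lcpInf] at hle
  obtain ⟨hx, hxk⟩ := getElem?_take_penc_idxOf_of_fceRank_le hle'
  obtain ⟨hy, hyk⟩ := getElem?_take_penc_idxOf_of_fceRank_le (n := L) (l := ys) (a := b)
    (by rw [hC, ← heq]; exact hle')
  rw [hC] at hy hyk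
  have hj : ys.idxOf (PSym.p b) = xs.idxOf (PSym.p a) := eq_of_count_take_eq hy hx (by omega)
  rw [List.getElem?_take] at hx
  split_ifs at hx with hjL
  rw [penc_p_cons, penc_p_cons, hj, lcp_cons_self, lcp_set_of_lt_lcp hjL,
    lcpInf_cons_inf_set_fin hjL hx, he]
  exact ⟨List.Lex.cons (List.Lex.set_of_lt_lcp hjL _ hlt), rfl, rfl⟩
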